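/- arXiv:1801.05152 — 4 statements merged into one kernel-verified Lean document; each statement's English description precedes it below -/
import Mathlib

section
/- For any N ∈ ℕ*, z₁,…,z_N in the open unit disk 𝔻 ⊂ ℂ and d₁,…,d_N ∈ ℤ, the series identity Σ_{n=1}^∞ (1/n) |Σ_{j=1}^N d_j z_jⁿ|² = − Σ_{j=1}^N d_j² ln(1−|z_j|²) − Σ_{i≠j} d_i d_j ln|1−z_i z̄_j| holds (both sides being finite). -/
open Complex ComplexConjugate

/-!
Expanding `|Σ_j d_j z_jⁿ|² = Σ_{i,j} d_i d_j (z_i z̄_j)ⁿ` turns the left-hand side into a finite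
combination of the series `Σ_n wⁿ/n = -log(1 - w)` with `w = z_i z̄_j ∈ 𝔻`, whose real parts are
`-ln|1 - w|`. The diagonal terms have `w = |z_i|² ∈ [0, 1)`, giving `-ln(1 - |z_i|²)`.
-/

namespace Complex

lemma hasSum_re_pow_succ_div {w : ℂ} (hw : ‖w‖ < 1) :
    HasSum (fun n : ℕ => (w ^ (n + 1)).re / (n + 1)) (-Real.log ‖1 - w‖) := by
  have h := hasSum_re (hasSum_taylorSeries_neg_log' hw)
  rw [neg_re, log_re] at h
  convert h using 2 with n
  rw [← ofReal_natCast, ← ofReal_one, ← ofReal_add, div_ofReal_re]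

lemma sq_norm_sum {ι : Type*} (s : Finset ι) (c : ι → ℂ) :
    ‖∑ j ∈ s, c j‖ ^ 2 = ∑ i ∈ s, ∑ j ∈ s, (c i * conj (c j)).re := by
  rw [← ofReal_re (_ ^ 2), ofReal_pow, ← mul_conj', map_sum, Finset.sum_mul_sum, re_sum]
  simp only [re_sum]

lemma norm_one_sub_mul_conj_self {z : ℂ} (hz : ‖z‖ ≤ 1) :
    ‖1 - z * conj z‖ = 1 - ‖z‖ ^ 2 := by
  rw [mul_conj', ← ofReal_pow, ← ofReal_one, ← ofReal_sub, norm_real, Real.norm_eq_abs,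
    abs_of_nonneg]
  nlinarith [norm_nonneg z]

end Complex

lemma hasSum_inv_succ_mul_sq_norm_sum_pow {ι : Type*} [Fintype ι] (a : ι → ℝ) {z : ι → ℂ}
    (hz : ∀ j, ‖z j‖ < 1) :
    HasSum (fun n : ℕ => 1 / (n + 1 : ℝ) * ‖∑ j, (a j : ℂ) * z j ^ (n + 1)‖ ^ 2)
      (∑ i, ∑ j, a i * a j * -Real.log ‖1 - z i * conj (z j)‖) := by
  have hw : ∀ i j, ‖z i * conj (z j)‖ < 1 := fun i j => by
    rw [norm_mul, RCLike.norm_conj]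
    exact mul_lt_one_of_nonneg_of_lt_one_left (norm_nonneg _) (hz i) (hz j).le
  have hexpand : ∀ n : ℕ, 1 / (n + 1 : ℝ) * ‖∑ j, (a j : ℂ) * z j ^ (n + 1)‖ ^ 2
      = ∑ i, ∑ j, a i * a j * (((z i * conj (z j)) ^ (n + 1)).re / (n + 1)) := by
    intro n
    simp only [Complex.sq_norm_sum, Finset.mul_sum, map_mul, map_pow, conj_ofReal, mul_pow]
    refine Finset.sum_congr rfl fun i _ => Finset.sum_congr rfl fun j _ => ?_
    rw [show (a i : ℂ) * z i ^ (n + 1) * ((a j : ℂ) * conj (z j) ^ (n + 1))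
        = ((a i * a j : ℝ) : ℂ) * (z i ^ (n + 1) * conj (z j) ^ (n + 1)) by push_cast; ring,
      re_ofReal_mul]
    ring
  simp only [hexpand]
  exact hasSum_sum fun i _ => hasSum_sum fun j _ =>
    (hasSum_re_pow_succ_div (hw i j)).mul_left (a i * a j)

theorem series_identity_general (N : ℕ) (z : Fin N → ℂ)
    (hz : ∀ j, ‖z j‖ < 1) (d : Fin N → ℤ) :
    Summable (fun n : ℕ =>
      (1 / (n + 1 : ℝ)) * ‖∑ j, (d j : ℂ) * z j ^ (n + 1)‖ ^ 2) ∧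
    ∑' n : ℕ, (1 / (n + 1 : ℝ)) * ‖∑ j, (d j : ℂ) * z j ^ (n + 1)‖ ^ 2
      = -(∑ j, (d j : ℝ) ^ 2 * Real.log (1 - ‖z j‖ ^ 2))
        - ∑ i, ∑ j ∈ Finset.univ.filter (fun j => j ≠ i),
            (d i : ℝ) * (d j : ℝ) * Real.log ‖1 - z i * (starRingEnd ℂ) (z j)‖ := by
  have h := hasSum_inv_succ_mul_sq_norm_sum_pow (fun j => (d j : ℝ)) hz
  simp only [ofReal_intCast] at h
  refine ⟨h.summable, h.tsum_eq.trans ?_⟩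
  have hrow : ∀ i, ∑ j, (d i : ℝ) * d j * -Real.log ‖1 - z i * conj (z j)‖
      = -((d i : ℝ) ^ 2 * Real.log (1 - ‖z i‖ ^ 2))
        - ∑ j ∈ Finset.univ.filter (fun j => j ≠ i),
            (d i : ℝ) * d j * Real.log ‖1 - z i * conj (z j)‖ := by
    intro i
    rw [Finset.filter_ne', ← Finset.add_sum_erase _ _ (Finset.mem_univ i),
      norm_one_sub_mul_conj_self (hz i).le]
    simp only [mul_neg, Finset.sum_neg_distrib]
    ring
  rw [Finset.sum_congr rfl fun i _ => hrow i, Finset.sum_sub_distrib, Finset.sum_neg_distrib]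

/-- **Series identity.** For `z₁,…,z_N` in the open unit disk and `d₁,…,d_N ∈ ℤ`,
`Σ_{n≥1} (1/n)|Σ_j d_j z_jⁿ|² = −Σ_j d_j² ln(1−|z_j|²) − Σ_{i≠j} d_i d_j ln|1−z_i z̄_j|`,
both sides being finite. -/
theorem series_identity (N : ℕ) (hN : 0 < N) (z : Fin N → ℂ)
    (hz : ∀ j, ‖z j‖ < 1) (d : Fin N → ℤ) :
    Summable (fun n : ℕ =>
      (1 / (n + 1 : ℝ)) * ‖∑ j, (d j : ℂ) * z j ^ (n + 1)‖ ^ 2) ∧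
    ∑' n : ℕ, (1 / (n + 1 : ℝ)) * ‖∑ j, (d j : ℂ) * z j ^ (n + 1)‖ ^ 2
      = -(∑ j, (d j : ℝ) ^ 2 * Real.log (1 - ‖z j‖ ^ 2))
        - ∑ i, ∑ j ∈ Finset.univ.filter (fun j => j ≠ i),
            (d i : ℝ) * (d j : ℝ) * Real.log ‖1 - z i * (starRingEnd ℂ) (z j)‖ :=
  series_identity_general N z hz d
end

section
/- Let ω = 𝔻, α = b² on 𝔻 and 1 outside with b > 0, N ≥ 2, and d ∈ ℤ^N such that there exist k ≠ l with d_k d_l < 0. Then inf{W^micro(z,d) : z ∈ (𝔻^N)*} = −∞, where W^micro(z,d) = −b²π[ Σ_{i≠j} dᵢd_j ln|zᵢ−z_j| + ((1−b²)/(1+b²)) Σ_j d_j² ln(1−|z_j|²) + ((1−b²)/(1+b²)) Σ_{i≠j} dᵢd_j ln|1−zᵢz̄_j| ]. -/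
noncomputable section

open Real

namespace GLPin

/-- The microscopic renormalized energy in the circular case (`ω = 𝔻`, `α = b²` on `𝔻` and `1`
outside):
`W^micro(z,d) = −b²π[ Σ_{i≠j} dᵢd_j ln|zᵢ−z_j| + ((1−b²)/(1+b²)) Σ_j d_j² ln(1−|z_j|²)
  + ((1−b²)/(1+b²)) Σ_{i≠j} dᵢd_j ln|1−zᵢz̄_j| ]`. -/
def Wmicro (b : ℝ) {N : ℕ} (z : Fin N → ℂ) (d : Fin N → ℤ) : ℝ :=
  -(b ^ 2) * π *
    ((∑ i, ∑ j ∈ Finset.univ.filter (fun j => j ≠ i),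
        (d i : ℝ) * (d j : ℝ) * Real.log (‖z i - z j‖))
      + (1 - b ^ 2) / (1 + b ^ 2) *
          ∑ j, (d j : ℝ) ^ 2 * Real.log (1 - ‖z j‖ ^ 2)
      + (1 - b ^ 2) / (1 + b ^ 2) *
          ∑ i, ∑ j ∈ Finset.univ.filter (fun j => j ≠ i),
            (d i : ℝ) * (d j : ℝ) * Real.log (‖1 - z i * (starRingEnd ℂ) (z j)‖))

private lemma log_abs_le (t C : ℝ) (hC : 0 ≤ C) (ht1 : Real.exp (-C) ≤ t) (ht2 : t ≤ 1) :
    |Real.log t| ≤ C := by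
  have ht0 : 0 < t := lt_of_lt_of_le (Real.exp_pos _) ht1
  have h1 : -C ≤ Real.log t := (Real.le_log_iff_exp_le ht0).2 ht1
  have h2 : Real.log t ≤ 0 := Real.log_nonpos ht0.le ht2
  rw [abs_le]; constructor <;> linarith

private lemma term_abs (a t C : ℝ) (hC : 0 ≤ C) (ht1 : Real.exp (-C) ≤ t) (ht2 : t ≤ 1) :
    |a * Real.log t| ≤ |a| * C := by
  rw [abs_mul]
  exact mul_le_mul_of_nonneg_left (log_abs_le t C hC ht1 ht2) (abs_nonneg a)

private lemma term_lb (a t C : ℝ) (hC : 0 ≤ C) (ht1 : Real.exp (-C) ≤ t) (ht2 : t ≤ 1) :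
    -(|a| * C) ≤ a * Real.log t := by
  have h1 := term_abs a t C hC ht1 ht2
  have h2 := neg_abs_le (a * Real.log t)
  linarith

set_option maxHeartbeats 2000000 in
/-- **Degrees of opposite signs:** if there are `k ≠ l` with `d_k d_l < 0` then
`inf{W^micro(z,d) : z ∈ (𝔻^N)*} = −∞`. -/
theorem opposite_signs_inf_eq_bot (b : ℝ) (hb : 0 < b) (N : ℕ) (hN : 2 ≤ N)
    (d : Fin N → ℤ) (k l : Fin N) (hkl : k ≠ l) (hsign : d k * d l < 0) :
    ∀ M : ℝ, ∃ z : Fin N → ℂ,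
      (∀ i, z i ∈ Metric.ball (0:ℂ) 1) ∧ Function.Injective z ∧ Wmicro b z d < M := by
  intro M
  have hπ : 0 < π := Real.pi_pos
  have hbπ : 0 < b ^ 2 * π := by positivity
  have hNR : (2:ℝ) ≤ (N:ℝ) := by exact_mod_cast hN
  have hNpos : (0:ℝ) < (N:ℝ) := by linarith
  -- the numerical constants
  set S0 : ℝ := ∑ i, (|d i| : ℝ) with hS0def
  have hS0nn : 0 ≤ S0 := Finset.sum_nonneg fun i _ => by positivity
  set D : ℝ := S0 * S0 with hDdef
  have hD0 : 0 ≤ D := mul_nonneg hS0nn hS0nn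
  set L : ℝ := Real.log (4 * N) with hLdef
  have hL0 : 0 ≤ L := Real.log_nonneg (by linarith)
  have hexpL : Real.exp (-L) = 1 / (4 * N) := by
    rw [hLdef, Real.exp_neg, Real.exp_log (by positivity), one_div]
  set T : ℝ := max (Real.log (8 * N)) ((3 * D * L + (|M| + 1) / (b ^ 2 * π)) / 2) with hTdef
  have hT8 : Real.log (8 * N) ≤ T := le_max_left _ _
  have hT2 : (3 * D * L + (|M| + 1) / (b ^ 2 * π)) / 2 ≤ T := le_max_right _ _
  have hT0 : 0 ≤ T := le_trans (Real.log_nonneg (by linarith)) hT8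
  set ε : ℝ := Real.exp (-T) with hεdef
  have hε0 : 0 < ε := Real.exp_pos _
  have hε8 : ε ≤ 1 / (8 * N) := by
    calc ε ≤ Real.exp (-(Real.log (8 * N))) := Real.exp_le_exp.2 (neg_le_neg hT8)
      _ = 1 / (8 * N) := by
          rw [Real.exp_neg, Real.exp_log (by positivity : (0:ℝ) < 8 * N), one_div]
  have hlogε : Real.log ε = -T := Real.log_exp _
  -- the configuration
  set x : Fin N → ℝ := fun i => if i = k then 0 else if i = l then ε else ((i : ℕ) + 1) / (2 * N)
    with hxdef
  set z : Fin N → ℂ := fun i => ((x i : ℝ) : ℂ) with hzdef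
  have hxk : x k = 0 := by simp [hxdef]
  have hxl : x l = ε := by simp [hxdef, Ne.symm hkl]
  have hxo : ∀ i, i ≠ k → i ≠ l → x i = ((i : ℕ) + 1) / (2 * N) := by
    intro i h1 h2; simp [hxdef, h1, h2]
  have hεhalf : ε ≤ 1 / 2 := by
    have h : (1:ℝ) / (8 * N) ≤ 1 / 2 := by
      rw [div_le_div_iff₀ (by positivity) (by norm_num)]; linarith
    linarith
  have hlow : ∀ i, i ≠ k → i ≠ l → 1 / (2 * N) ≤ x i := by
    intro i h1 h2
    rw [hxo i h1 h2, div_le_div_iff₀ (by positivity) (by positivity)]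
    have : (0:ℝ) ≤ ((i:ℕ):ℝ) := Nat.cast_nonneg _
    nlinarith
  have hbd : ∀ i, 0 ≤ x i ∧ x i ≤ 1 / 2 := by
    intro i
    by_cases h1 : i = k
    · rw [h1, hxk]; norm_num
    by_cases h2 : i = l
    · rw [h2, hxl]; exact ⟨hε0.le, hεhalf⟩
    rw [hxo i h1 h2]
    refine ⟨by positivity, ?_⟩
    rw [div_le_iff₀ (by positivity)]
    have hi : ((i : ℕ) : ℝ) + 1 ≤ (N : ℝ) := by exact_mod_cast Nat.succ_le_of_lt i.isLt
    linarith
  have h24 : (1:ℝ) / (4 * N) ≤ 1 / (2 * N) := by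
    rw [div_le_div_iff₀ (by positivity) (by positivity)]; linarith
  -- gap between non-special pairs
  have hgap : ∀ i j, i ≠ j → ¬(i = k ∧ j = l) → ¬(i = l ∧ j = k) →
      1 / (4 * N) ≤ |x i - x j| := by
    intro i j hij hs1 hs2
    have hother : ∀ m, m ≠ k → m ≠ l → ∀ c : ℝ, 0 ≤ c → c ≤ 1 / (8 * N) →
        1 / (4 * N) ≤ |c - x m| := by
      intro m h1 h2 c hc0 hc8
      have hm := hlow m h1 h2
      have h28 : (1:ℝ) / (4 * N) ≤ 1 / (2 * N) - 1 / (8 * N) := by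
        have he : (1:ℝ) / (2 * N) - 1 / (8 * N) = 3 / (8 * N) := by
          field_simp; ring
        rw [he, div_le_div_iff₀ (by positivity) (by positivity)]; linarith
      have h4N : (0:ℝ) < 1 / (4 * N) := by positivity
      rw [abs_sub_comm, abs_of_nonneg (by linarith)]
      linarith
    by_cases hik : i = k
    · by_cases hjl : j = l
      · exact absurd ⟨hik, hjl⟩ hs1
      · have hjk : j ≠ k := fun h => hij (hik.trans h.symm)
        rw [hik, hxk]
        have h := hother j hjk hjl 0 le_rfl (by positivity)
        rw [abs_sub_comm] at h ⊢
        simpa using h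
    by_cases hil : i = l
    · by_cases hjk : j = k
      · exact absurd ⟨hil, hjk⟩ hs2
      by_cases hjl : j = l
      · exact absurd (hil.trans hjl.symm) hij
      · rw [hil, hxl, abs_sub_comm]
        have h := hother j hjk hjl ε hε0.le hε8
        rwa [abs_sub_comm] at h
    by_cases hjk : j = k
    · rw [hjk, hxk]
      have h := hother i hik hil 0 le_rfl (by positivity)
      rw [abs_sub_comm] at h
      simpa using h
    by_cases hjl : j = l
    · rw [hjl, hxl, abs_sub_comm]
      exact hother i hik hil ε hε0.le hε8
    -- both "other"
    rw [hxo i hik hil, hxo j hjk hjl, div_sub_div_same, abs_div,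
      abs_of_pos (by positivity : (0:ℝ) < 2 * N)]
    have hvals : (1:ℝ) ≤ |(((i:ℕ):ℝ) + 1) - (((j:ℕ):ℝ) + 1)| := by
      have hne : (i : ℕ) ≠ (j : ℕ) := fun h => hij (Fin.ext h)
      have hz : ((i:ℕ):ℤ) - ((j:ℕ):ℤ) ≠ 0 := by omega
      have h1 : (1:ℤ) ≤ |((i:ℕ):ℤ) - ((j:ℕ):ℤ)| := Int.one_le_abs hz
      have h2 : (1:ℝ) ≤ |((((i:ℕ):ℤ) - ((j:ℕ):ℤ) : ℤ) : ℝ)| := by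
        rw [← Int.cast_abs]; exact_mod_cast h1
      convert h2 using 2; push_cast; ring
    calc (1:ℝ) / (4 * N) ≤ 1 / (2 * N) := h24
      _ ≤ |(((i:ℕ):ℝ) + 1) - (((j:ℕ):ℝ) + 1)| / (2 * N) :=
          (div_le_div_iff_of_pos_right (by positivity)).2 hvals
  have hub : ∀ i j, |x i - x j| ≤ 1 := by
    intro i j
    have h1 := hbd i; have h2 := hbd j
    rw [abs_le]; constructor <;> linarith [h1.1, h1.2, h2.1, h2.2]
  -- translation to ℂ
  have habs_sub : ∀ i j, ‖z i - z j‖ = |x i - x j| := by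
    intro i j
    rw [hzdef]
    rw [show ((x i : ℝ) : ℂ) - ((x j : ℝ) : ℂ) = (((x i - x j : ℝ)) : ℂ) by push_cast; ring]
    exact Complex.norm_real _
  have habs : ∀ j, ‖z j‖ = x j := by
    intro j
    rw [hzdef, Complex.norm_real, Real.norm_eq_abs, abs_of_nonneg (hbd j).1]
  have hone : ∀ i j, ‖1 - z i * (starRingEnd ℂ) (z j)‖ = 1 - x i * x j := by
    intro i j
    rw [hzdef]
    rw [show (1:ℂ) - ((x i : ℝ) : ℂ) * (starRingEnd ℂ) ((x j : ℝ) : ℂ)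
        = (((1 - x i * x j : ℝ)) : ℂ) by rw [Complex.conj_ofReal]; push_cast; ring]
    rw [Complex.norm_real, Real.norm_eq_abs, abs_of_nonneg]
    have h1 := hbd i; have h2 := hbd j
    nlinarith [h1.1, h1.2, h2.1, h2.2]
  have hmul_bd : ∀ i j, Real.exp (-L) ≤ 1 - x i * x j ∧ 1 - x i * x j ≤ 1 := by
    intro i j
    have h1 := hbd i; have h2 := hbd j
    rw [hexpL]
    constructor
    · have h4 : (1:ℝ) / (4 * N) ≤ 1 / 8 := by
        rw [div_le_div_iff₀ (by positivity) (by norm_num)]; linarith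
      nlinarith [h1.1, h1.2, h2.1, h2.2]
    · nlinarith [h1.1, h2.1]
  -- |c| ≤ 1
  set c : ℝ := (1 - b ^ 2) / (1 + b ^ 2) with hcdef
  have hc1 : |c| ≤ 1 := by
    rw [hcdef, abs_div, abs_of_pos (by positivity : (0:ℝ) < 1 + b ^ 2),
      div_le_one (by positivity)]
    rw [abs_le]; constructor <;> nlinarith [sq_nonneg b]
  -- bound on double sums of |d i||d j|
  have hdouble : ∀ (F : Fin N → Finset (Fin N)),
      (∑ i, ∑ j ∈ F i, (|d i| : ℝ) * (|d j| : ℝ)) ≤ D := by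
    intro F
    have h1 : ∀ i, (∑ j ∈ F i, (|d i| : ℝ) * (|d j| : ℝ)) ≤ ∑ j, (|d i| : ℝ) * (|d j| : ℝ) := by
      intro i
      apply Finset.sum_le_sum_of_subset_of_nonneg (Finset.subset_univ _)
      intro j _ _; positivity
    calc (∑ i, ∑ j ∈ F i, (|d i| : ℝ) * (|d j| : ℝ))
        ≤ ∑ i, ∑ j, (|d i| : ℝ) * (|d j| : ℝ) := Finset.sum_le_sum fun i _ => h1 i
      _ = S0 * S0 := by rw [Finset.sum_mul_sum]
      _ = D := hDdef.symm
  have hdiag : (∑ j, (|d j| : ℝ) * (|d j| : ℝ)) ≤ D := by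
    have h1 : ∀ j : Fin N, (|d j| : ℝ) ≤ S0 := by
      intro j
      exact Finset.single_le_sum (f := fun i => ((|d i| : ℝ))) (fun i _ => by positivity)
        (Finset.mem_univ j)
    calc (∑ j, (|d j| : ℝ) * (|d j| : ℝ)) ≤ ∑ j, (|d j| : ℝ) * S0 :=
          Finset.sum_le_sum fun j _ => mul_le_mul_of_nonneg_left (h1 j) (by positivity)
      _ = S0 * S0 := by rw [← Finset.sum_mul]
      _ = D := hDdef.symm
  -- d k * d l ≤ -1
  have hdkl : ((d k : ℝ)) * (d l : ℝ) ≤ -1 := by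
    have h1 : d k * d l ≤ -1 := by omega
    have h2 : ((d k * d l : ℤ) : ℝ) ≤ ((-1 : ℤ) : ℝ) := by exact_mod_cast h1
    push_cast at h2; linarith
  -- the three sums
  set S1 : ℝ := ∑ i, ∑ j ∈ Finset.univ.filter (fun j => j ≠ i),
      (d i : ℝ) * (d j : ℝ) * Real.log (‖z i - z j‖) with hS1def
  set S2 : ℝ := ∑ j, (d j : ℝ) ^ 2 * Real.log (1 - ‖z j‖ ^ 2) with hS2def
  set S3 : ℝ := ∑ i, ∑ j ∈ Finset.univ.filter (fun j => j ≠ i),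
      (d i : ℝ) * (d j : ℝ) * Real.log (‖1 - z i * (starRingEnd ℂ) (z j)‖)
    with hS3def
  -- bound on S1
  have hS1 : 2 * T - D * L ≤ S1 := by
    have hterm : ∀ i j, j ≠ i → ¬(i = k ∧ j = l) → ¬(i = l ∧ j = k) →
        -((|d i| : ℝ) * (|d j| : ℝ) * L) ≤
          (d i : ℝ) * (d j : ℝ) * Real.log (‖z i - z j‖) := by
      intro i j hji hs1 hs2
      rw [habs_sub]
      have hg := hgap i j (Ne.symm hji) hs1 hs2
      have h := term_lb ((d i : ℝ) * (d j : ℝ)) (|x i - x j|) L hL0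
        (by rw [hexpL]; exact hg) (hub i j)
      rw [abs_mul] at h
      exact h
    -- per-index lower bound
    have hper : ∀ i : Fin N,
        (if i = k then T else if i = l then T else 0)
          - (∑ j ∈ Finset.univ.filter (fun j => j ≠ i), (|d i| : ℝ) * (|d j| : ℝ) * L)
        ≤ ∑ j ∈ Finset.univ.filter (fun j => j ≠ i),
            (d i : ℝ) * (d j : ℝ) * Real.log (‖z i - z j‖) := by
      intro i
      by_cases hik : i = k
      · rw [hik, if_pos rfl]
        have hlmem : l ∈ Finset.univ.filter (fun j => j ≠ k) := by
          simp [Ne.symm hkl]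
        rw [← Finset.add_sum_erase _
          (fun j => (d k : ℝ) * (d j : ℝ) * Real.log (‖z k - z j‖)) hlmem,
          ← Finset.add_sum_erase _ (fun j => (|d k| : ℝ) * (|d j| : ℝ) * L) hlmem]
        have hkl_term : T ≤ (d k : ℝ) * (d l : ℝ) * Real.log (‖z k - z l‖) := by
          rw [habs_sub, hxk, hxl, zero_sub, abs_neg, abs_of_pos hε0, hlogε]
          nlinarith [hdkl, hT0]
        have hrest : ∀ j ∈ (Finset.univ.filter (fun j => j ≠ k)).erase l,
            -((|d k| : ℝ) * (|d j| : ℝ) * L) ≤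
              (d k : ℝ) * (d j : ℝ) * Real.log (‖z k - z j‖) := by
          intro j hj
          rw [Finset.mem_erase, Finset.mem_filter] at hj
          exact hterm k j hj.2.2 (fun h => hj.1 h.2) (fun h => hkl h.1)
        have h1 : (∑ j ∈ (Finset.univ.filter (fun j => j ≠ k)).erase l,
              -((|d k| : ℝ) * (|d j| : ℝ) * L)) ≤
            ∑ j ∈ (Finset.univ.filter (fun j => j ≠ k)).erase l,
              (d k : ℝ) * (d j : ℝ) * Real.log (‖z k - z j‖) :=
          Finset.sum_le_sum hrest
        rw [Finset.sum_neg_distrib] at h1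
        have h2 : (0:ℝ) ≤ (|d k| : ℝ) * (|d l| : ℝ) * L := by positivity
        linarith
      by_cases hil : i = l
      · rw [hil, if_neg (Ne.symm hkl), if_pos rfl]
        have hkmem : k ∈ Finset.univ.filter (fun j => j ≠ l) := by
          simp [hkl]
        rw [← Finset.add_sum_erase _
          (fun j => (d l : ℝ) * (d j : ℝ) * Real.log (‖z l - z j‖)) hkmem,
          ← Finset.add_sum_erase _ (fun j => (|d l| : ℝ) * (|d j| : ℝ) * L) hkmem]
        have hkl_term : T ≤ (d l : ℝ) * (d k : ℝ) * Real.log (‖z l - z k‖) := by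
          rw [habs_sub, hxk, hxl, sub_zero, abs_of_pos hε0, hlogε]
          nlinarith [hdkl, hT0]
        have hrest : ∀ j ∈ (Finset.univ.filter (fun j => j ≠ l)).erase k,
            -((|d l| : ℝ) * (|d j| : ℝ) * L) ≤
              (d l : ℝ) * (d j : ℝ) * Real.log (‖z l - z j‖) := by
          intro j hj
          rw [Finset.mem_erase, Finset.mem_filter] at hj
          exact hterm l j hj.2.2 (fun h => hkl h.1.symm) (fun h => hj.1 h.2)
        have h1 : (∑ j ∈ (Finset.univ.filter (fun j => j ≠ l)).erase k,
              -((|d l| : ℝ) * (|d j| : ℝ) * L)) ≤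
            ∑ j ∈ (Finset.univ.filter (fun j => j ≠ l)).erase k,
              (d l : ℝ) * (d j : ℝ) * Real.log (‖z l - z j‖) :=
          Finset.sum_le_sum hrest
        rw [Finset.sum_neg_distrib] at h1
        have h2 : (0:ℝ) ≤ (|d l| : ℝ) * (|d k| : ℝ) * L := by positivity
        linarith
      · simp only [if_neg hik, if_neg hil]
        have h1 : (∑ j ∈ Finset.univ.filter (fun j => j ≠ i),
              -((|d i| : ℝ) * (|d j| : ℝ) * L)) ≤
            ∑ j ∈ Finset.univ.filter (fun j => j ≠ i),
              (d i : ℝ) * (d j : ℝ) * Real.log (‖z i - z j‖) := by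
          apply Finset.sum_le_sum
          intro j hj
          rw [Finset.mem_filter] at hj
          exact hterm i j hj.2 (fun h => hik h.1) (fun h => hil h.1)
        rw [Finset.sum_neg_distrib] at h1
        linarith
    have hsum := Finset.sum_le_sum fun i (_ : i ∈ Finset.univ) => hper i
    rw [Finset.sum_sub_distrib] at hsum
    have hind : (∑ i : Fin N, (if i = k then T else if i = l then T else 0)) = 2 * T := by
      have hsplit : ∀ i : Fin N, (if i = k then T else if i = l then T else 0)
          = (if i = k then T else 0) + (if i = l then T else 0) := by
        intro i
        by_cases h1 : i = k
        · by_cases h2 : i = l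
          · exact absurd (h1.symm.trans h2) hkl
          · simp [h1, hkl]
        · by_cases h2 : i = l <;> simp [h1, h2, Ne.symm hkl]
      rw [Finset.sum_congr rfl fun i _ => hsplit i, Finset.sum_add_distrib,
        Finset.sum_ite_eq' Finset.univ k (fun _ => T),
        Finset.sum_ite_eq' Finset.univ l (fun _ => T)]
      simp; ring
    have hDL : (∑ i : Fin N, ∑ j ∈ Finset.univ.filter (fun j => j ≠ i),
        (|d i| : ℝ) * (|d j| : ℝ) * L) ≤ D * L := by
      have he : (∑ i : Fin N, ∑ j ∈ Finset.univ.filter (fun j => j ≠ i),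
          (|d i| : ℝ) * (|d j| : ℝ) * L)
          = (∑ i : Fin N, ∑ j ∈ Finset.univ.filter (fun j => j ≠ i),
            (|d i| : ℝ) * (|d j| : ℝ)) * L := by
        rw [Finset.sum_mul]
        congr 1; funext i
        rw [Finset.sum_mul]
      rw [he]
      exact mul_le_mul_of_nonneg_right (hdouble _) hL0
    rw [hind] at hsum
    calc 2 * T - D * L ≤ 2 * T - (∑ i : Fin N, ∑ j ∈ Finset.univ.filter (fun j => j ≠ i),
          (|d i| : ℝ) * (|d j| : ℝ) * L) := by linarith
      _ ≤ S1 := hsum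
  -- bound on S2
  have hS2 : |S2| ≤ D * L := by
    have h1 : |S2| ≤ ∑ j, (|d j| : ℝ) * (|d j| : ℝ) * L := by
      refine (Finset.abs_sum_le_sum_abs _ _).trans (Finset.sum_le_sum fun j _ => ?_)
      rw [habs]
      have hb1 := hbd j
      have h := term_abs ((d j : ℝ) ^ 2) (1 - x j ^ 2) L hL0 ?_ ?_
      · calc |(d j : ℝ) ^ 2 * Real.log (1 - x j ^ 2)| ≤ |(d j : ℝ) ^ 2| * L := h
          _ = (|d j| : ℝ) * (|d j| : ℝ) * L := by rw [sq, abs_mul]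
      · have := (hmul_bd j j).1
        calc Real.exp (-L) ≤ 1 - x j * x j := this
          _ = 1 - x j ^ 2 := by ring
      · nlinarith [hb1.1]
    have h2 : (∑ j, (|d j| : ℝ) * (|d j| : ℝ) * L) ≤ D * L := by
      rw [← Finset.sum_mul]
      exact mul_le_mul_of_nonneg_right hdiag hL0
    linarith
  -- bound on S3
  have hS3 : |S3| ≤ D * L := by
    have h1 : |S3| ≤ ∑ i, ∑ j ∈ Finset.univ.filter (fun j => j ≠ i),
        (|d i| : ℝ) * (|d j| : ℝ) * L := by
      refine (Finset.abs_sum_le_sum_abs _ _).trans (Finset.sum_le_sum fun i _ => ?_)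
      refine (Finset.abs_sum_le_sum_abs _ _).trans (Finset.sum_le_sum fun j _ => ?_)
      rw [hone]
      have h := term_abs ((d i : ℝ) * (d j : ℝ)) (1 - x i * x j) L hL0
        (hmul_bd i j).1 (hmul_bd i j).2
      calc |(d i : ℝ) * (d j : ℝ) * Real.log (1 - x i * x j)|
          ≤ |(d i : ℝ) * (d j : ℝ)| * L := h
        _ = (|d i| : ℝ) * (|d j| : ℝ) * L := by rw [abs_mul]
    have h2 : (∑ i : Fin N, ∑ j ∈ Finset.univ.filter (fun j => j ≠ i),
        (|d i| : ℝ) * (|d j| : ℝ) * L) ≤ D * L := by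
      have he : (∑ i : Fin N, ∑ j ∈ Finset.univ.filter (fun j => j ≠ i),
          (|d i| : ℝ) * (|d j| : ℝ) * L)
          = (∑ i : Fin N, ∑ j ∈ Finset.univ.filter (fun j => j ≠ i),
            (|d i| : ℝ) * (|d j| : ℝ)) * L := by
        rw [Finset.sum_mul]
        congr 1; funext i
        rw [Finset.sum_mul]
      rw [he]
      exact mul_le_mul_of_nonneg_right (hdouble _) hL0
    linarith
  -- combine
  refine ⟨z, ?_, ?_, ?_⟩
  · intro i
    rw [mem_ball_zero_iff, hzdef]
    have := (hbd i).2
    calc ‖((x i : ℝ) : ℂ)‖ = |x i| := Complex.norm_real _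
      _ = x i := abs_of_nonneg (hbd i).1
      _ < 1 := by linarith
  · intro i j hij
    by_contra hne
    have hxij : x i = x j := by
      have : ((x i : ℝ) : ℂ) = ((x j : ℝ) : ℂ) := hij
      exact_mod_cast this
    by_cases hs1 : i = k ∧ j = l
    · rw [hs1.1, hs1.2, hxk, hxl] at hxij
      exact absurd hxij.symm (ne_of_gt hε0)
    by_cases hs2 : i = l ∧ j = k
    · rw [hs2.1, hs2.2, hxk, hxl] at hxij
      exact absurd hxij (ne_of_gt hε0)
    have := hgap i j hne hs1 hs2
    rw [hxij, sub_self, abs_zero] at this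
    have : (0:ℝ) < 1 / (4 * N) := by positivity
    linarith
  · -- the energy estimate
    have hA : (|M| + 1) / (b ^ 2 * π) ≤ S1 + c * S2 + c * S3 := by
      have hc2 : -(D * L) ≤ c * S2 := by
        have h := abs_mul c S2
        have h2 : |c * S2| ≤ D * L := by
          rw [abs_mul]
          calc |c| * |S2| ≤ 1 * (D * L) := mul_le_mul hc1 hS2 (abs_nonneg _) zero_le_one
            _ = D * L := one_mul _
        linarith [neg_abs_le (c * S2)]
      have hc3 : -(D * L) ≤ c * S3 := by
        have h2 : |c * S3| ≤ D * L := by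
          rw [abs_mul]
          calc |c| * |S3| ≤ 1 * (D * L) := mul_le_mul hc1 hS3 (abs_nonneg _) zero_le_one
            _ = D * L := one_mul _
        linarith [neg_abs_le (c * S3)]
      linarith
    have hW : Wmicro b z d = -(b ^ 2) * π * (S1 + c * S2 + c * S3) := by
      rw [Wmicro, hS1def, hS2def, hS3def, hcdef]
    rw [hW]
    have hQpos : 0 < (|M| + 1) / (b ^ 2 * π) := by positivity
    calc -(b ^ 2) * π * (S1 + c * S2 + c * S3)
        ≤ -(b ^ 2) * π * ((|M| + 1) / (b ^ 2 * π)) := by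
          have hneg : -(b ^ 2) * π ≤ 0 := by nlinarith
          exact mul_le_mul_of_nonpos_left hA hneg
      _ = -(|M| + 1) := by
          rw [mul_comm (-(b ^ 2)) π, mul_div_assoc']
          field_simp
      _ < M := by linarith [neg_abs_le M]
end GLPin
end
end

section
/- Let ω = 𝔻, b = 1 (so W^micro(z,d) = −π Σ_{i≠j} dᵢd_j ln|zᵢ−z_j|), N ≥ 2, and d ∈ ℤ^N with d_k d_l ≥ 0 for all k,l and d_{k₀} d_{l₀} > 0 for some k₀ ≠ l₀. Then 0 > inf{W^micro(z,d) : z ∈ (𝔻^N)*} > −π Σ_{i≠j} dᵢd_j ln 2, so the infimum is finite, but it is not attained: for every z ∈ (𝔻^N)*, setting λ = 2/(1 + max_l |z_l|) > 1 and z̃ = λz ∈ (𝔻^N)*, one has W^micro(z̃,d) = W^micro(z,d) − π ln λ · Σ_{i≠j} dᵢd_j < W^micro(z,d). -/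
noncomputable section

open Real Finset

private lemma roots_facts (N : ℕ) (hN : 2 ≤ N) :
    ∃ v : Fin N → ℂ, Function.Injective v ∧ (∀ a, ‖v a‖ = 1) ∧
      (∀ p : Fin N, ∑ q ∈ univ.filter (fun q => q ≠ p), Real.log (‖v p - v q‖)
        = Real.log N) := by
  have hN0 : N ≠ 0 := by omega
  haveI : NeZero N := ⟨hN0⟩
  set u : ℂ := Complex.exp (2 * ↑π * Complex.I / N) with hu_def
  have hu : IsPrimitiveRoot u N := Complex.isPrimitiveRoot_exp N hN0
  set v : Fin N → ℂ := fun a => u ^ (a : ℕ) with hv_def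
  have habs_u : ‖u‖ = 1 := by
    exact Complex.norm_eq_one_of_pow_eq_one hu.pow_eq_one hN0
  have habs_v : ∀ a, ‖v a‖ = 1 := by
    intro a; simp [hv_def, norm_pow, habs_u]
  have hinj : Function.Injective v := by
    intro a b h
    exact Fin.ext (hu.pow_inj a.isLt b.isLt h)
  have hv_add : ∀ a b : Fin N, v (a + b) = v a * v b := by
    intro a b
    have : v (a + b) = u ^ ((a.val + b.val) % N) := by
      simp [hv_def, Fin.val_add]
    rw [this, ← pow_eq_pow_mod _ hu.pow_eq_one, pow_add]
  have hprod1 : ∏ k ∈ univ.filter (fun k => k ≠ (0 : Fin N)), (1 - v k) = (N : ℂ) := by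
    obtain ⟨n, rfl⟩ : ∃ n, N = n + 1 := ⟨N - 1, by omega⟩
    have h := hu.prod_one_sub_pow_eq_order
    rw [show ((n+1 : ℕ) : ℂ) = (n : ℂ) + 1 by push_cast; ring, ← h]
    have hn1 : 1 ≤ n := by omega
    refine Finset.prod_nbij' (fun k => (k : Fin (n+1)).val - 1)
      (fun m => (⟨min (m + 1) n, by omega⟩ : Fin (n+1))) ?_ ?_ ?_ ?_ ?_
    · intro k hk
      simp only [mem_filter, mem_univ, true_and] at hk
      have h1 : k.val ≠ 0 := fun h => hk (Fin.ext h)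
      have h2 : k.val < n + 1 := k.isLt
      simp only [mem_range]; omega
    · intro m hm
      simp only [mem_range] at hm
      simp only [mem_filter, mem_univ, true_and]
      intro h
      have := congrArg Fin.val h
      simp only [Fin.val_mk, Fin.val_zero] at this
      omega
    · intro k hk
      simp only [mem_filter, mem_univ, true_and] at hk
      have h1 : k.val ≠ 0 := fun h => hk (Fin.ext h)
      have h2 : k.val < n + 1 := k.isLt
      exact Fin.ext (by simp only [Fin.val_mk]; omega)
    · intro m hm
      simp only [mem_range] at hm
      simp only [Fin.val_mk]; omega
    · intro k hk
      simp only [mem_filter, mem_univ, true_and] at hk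
      have h1 : k.val ≠ 0 := fun h => hk (Fin.ext h)
      have : k.val - 1 + 1 = k.val := by omega
      simp [hv_def, this]
  refine ⟨v, hinj, habs_v, ?_⟩
  intro p
  have hne : ∀ q : Fin N, q ≠ p → v p - v q ≠ 0 := by
    intro q hq
    exact sub_ne_zero_of_ne (fun h => hq (hinj h.symm))
  have habs_prod : ∏ q ∈ univ.filter (fun q => q ≠ p), ‖v p - v q‖ = (N : ℝ) := by
    have step : ∏ q ∈ univ.filter (fun q => q ≠ p), ‖v p - v q‖
        = ∏ k ∈ univ.filter (fun k => k ≠ (0 : Fin N)), ‖1 - v k‖ := by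
      refine Finset.prod_nbij' (fun q => q - p) (fun k => k + p) ?_ ?_ ?_ ?_ ?_
      · intro q hq
        simp only [mem_filter, mem_univ, true_and] at hq ⊢
        intro h; apply hq; rwa [sub_eq_zero] at h
      · intro k hk
        simp only [mem_filter, mem_univ, true_and] at hk ⊢
        intro h; apply hk
        have : k + p - p = p - p := by rw [h]
        simpa using this
      · intro q _; simp
      · intro k _; simp
      · intro q hq
        simp only [mem_filter, mem_univ, true_and] at hq
        have : v q = v (q - p) * v p := by
          rw [← hv_add]; simp
        rw [show v p - v q = v p * (1 - v (q - p)) by rw [this]; ring,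
          norm_mul, habs_v, one_mul]
    rw [step, ← norm_prod, hprod1, Complex.norm_natCast]
  rw [← Real.log_prod (fun q hq => by
      simp only [mem_filter, mem_univ, true_and] at hq
      exact (norm_ne_zero_iff.mpr (hne q hq))), habs_prod]

private lemma sum_pair_pos {N : ℕ} (w : Fin N → ℝ) (hw : ∀ k l, 0 ≤ w k * w l)
    (k₀ l₀ : Fin N) (h : k₀ ≠ l₀) (hp : 0 < w k₀ * w l₀) :
    0 < ∑ i, ∑ j ∈ univ.filter (fun j => j ≠ i), w i * w j := by
  refine Finset.sum_pos' (fun i _ => Finset.sum_nonneg fun j _ => hw i j)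
    ⟨k₀, mem_univ _, ?_⟩
  refine Finset.sum_pos' (fun j _ => hw k₀ j) ⟨l₀, ?_, hp⟩
  simp [h.symm, Ne.symm h]

private lemma exists_good_config (N : ℕ) (hN : 2 ≤ N) (w : Fin N → ℝ)
    (hw : ∀ k l, 0 ≤ w k * w l) (k₀ l₀ : Fin N) (hk : k₀ ≠ l₀) (hp : 0 < w k₀ * w l₀) :
    ∃ z : Fin N → ℂ, (∀ i, ‖z i‖ < 1) ∧ Function.Injective z ∧
      0 < ∑ i, ∑ j ∈ univ.filter (fun j => j ≠ i),
            w i * w j * Real.log (‖z i - z j‖) := by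
  obtain ⟨v, hinj, habs, hlog⟩ := roots_facts N hN
  set c : Fin N → Fin N → ℝ := fun p q => Real.log (‖v p - v q‖) with hc
  set S : ℝ := ∑ i, ∑ j ∈ univ.filter (fun j => j ≠ i), w i * w j with hS_def
  have hS : 0 < S := sum_pair_pos w hw k₀ l₀ hk hp
  have hN1 : (1:ℝ) < (N:ℝ) := by exact_mod_cast (by omega : 1 < N)
  have hlogN : 0 < Real.log N := Real.log_pos hN1
  set F : Equiv.Perm (Fin N) → ℝ :=
    fun σ => ∑ i, ∑ j ∈ univ.filter (fun j => j ≠ i), w i * w j * c (σ i) (σ j) with hF_def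
  have himage : ∀ (σ : Equiv.Perm (Fin N)) (i : Fin N),
      (univ.filter (fun j => j ≠ i)).image σ = univ.filter (fun q => q ≠ σ i) := by
    intro σ i
    ext q
    simp only [mem_image, mem_filter, mem_univ, true_and]
    constructor
    · rintro ⟨j, hj, rfl⟩
      exact fun h => hj (σ.injective h)
    · intro hq
      exact ⟨σ⁻¹ q, fun h => hq (by rw [← h]; simp), by simp⟩
  have hF : ∀ σ : Equiv.Perm (Fin N),
      F σ = ∑ p, ∑ q ∈ univ.filter (fun q => q ≠ p), w (σ⁻¹ p) * w (σ⁻¹ q) * c p q := by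
    intro σ
    rw [← Equiv.sum_comp σ
      (fun p => ∑ q ∈ univ.filter (fun q => q ≠ p), w (σ⁻¹ p) * w (σ⁻¹ q) * c p q)]
    apply sum_congr rfl
    intro i _
    rw [← himage σ i, Finset.sum_image (fun a _ b _ h => σ.injective h)]
    apply sum_congr rfl
    intro j _
    simp
  set T : ℝ := ∑ σ : Equiv.Perm (Fin N), w (σ k₀) * w (σ l₀) with hT_def
  have hTinv : ∀ p q : Fin N, p ≠ q →
      (∑ σ : Equiv.Perm (Fin N), w (σ⁻¹ p) * w (σ⁻¹ q)) = T := by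
    intro p q hpq
    have hinvsum : (∑ σ : Equiv.Perm (Fin N), w (σ⁻¹ p) * w (σ⁻¹ q))
        = ∑ σ : Equiv.Perm (Fin N), w (σ p) * w (σ q) := by
      exact Equiv.sum_comp (Equiv.inv (Equiv.Perm (Fin N))) (fun σ => w (σ p) * w (σ q))
    rw [hinvsum]
    -- build τ with τ p = k₀, τ q = l₀
    set q' : Fin N := Equiv.swap p k₀ q with hq'
    have hq'k : q' ≠ k₀ := by
      rw [hq']
      intro h
      have := (Equiv.swap p k₀).injective (h.trans (Equiv.swap_apply_left p k₀).symm)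
      exact hpq this.symm
    set τ : Equiv.Perm (Fin N) := (Equiv.swap q' l₀) * (Equiv.swap p k₀) with hτ
    have hτp : τ p = k₀ := by
      rw [hτ]
      simp only [Equiv.Perm.mul_apply, Equiv.swap_apply_left]
      exact Equiv.swap_apply_of_ne_of_ne (Ne.symm hq'k) hk
    have hτq : τ q = l₀ := by
      rw [hτ]
      simp only [Equiv.Perm.mul_apply, ← hq']
      exact Equiv.swap_apply_left q' l₀
    calc (∑ σ : Equiv.Perm (Fin N), w (σ p) * w (σ q))
        = ∑ σ : Equiv.Perm (Fin N), w ((σ * τ) p) * w ((σ * τ) q) :=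
          (Equiv.sum_comp (Equiv.mulRight τ) (fun σ => w (σ p) * w (σ q))).symm
      _ = T := by
          rw [hT_def]
          apply sum_congr rfl
          intro σ _
          simp [Equiv.Perm.mul_apply, hτp, hτq]
  have hT0 : 0 < T := by
    refine Finset.sum_pos' (fun σ _ => hw _ _) ⟨1, mem_univ _, by simpa using hp⟩
  have hA : ∑ p, ∑ q ∈ univ.filter (fun q => q ≠ p), c p q = N * Real.log N := by
    rw [Finset.sum_congr rfl (fun p _ => hlog p)]
    simp [Finset.card_univ, mul_comm]
  have hsum : ∑ σ : Equiv.Perm (Fin N), F σ = T * (N * Real.log N) := by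
    calc ∑ σ : Equiv.Perm (Fin N), F σ
        = ∑ σ : Equiv.Perm (Fin N), ∑ p, ∑ q ∈ univ.filter (fun q => q ≠ p),
            w (σ⁻¹ p) * w (σ⁻¹ q) * c p q := Finset.sum_congr rfl (fun σ _ => hF σ)
      _ = ∑ p, ∑ q ∈ univ.filter (fun q => q ≠ p),
            (∑ σ : Equiv.Perm (Fin N), w (σ⁻¹ p) * w (σ⁻¹ q)) * c p q := by
          rw [Finset.sum_comm]
          apply sum_congr rfl
          intro p _
          rw [Finset.sum_comm]
          apply sum_congr rfl
          intro q _
          rw [Finset.sum_mul]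
      _ = ∑ p, ∑ q ∈ univ.filter (fun q => q ≠ p), T * c p q := by
          apply sum_congr rfl
          intro p _
          apply sum_congr rfl
          intro q hq
          rw [hTinv p q (Ne.symm (mem_filter.mp hq).2)]
      _ = T * (N * Real.log N) := by
          rw [← hA, Finset.mul_sum]
          exact sum_congr rfl fun p _ => (Finset.mul_sum _ _ _).symm
  have hpos_sum : ∑ σ : Equiv.Perm (Fin N), (0:ℝ) < ∑ σ : Equiv.Perm (Fin N), F σ := by
    rw [hsum]
    have : (0:ℝ) < N := by linarith
    simpa using mul_pos hT0 (mul_pos this hlogN)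
  obtain ⟨σ, -, hσ⟩ := Finset.exists_lt_of_sum_lt hpos_sum
  set r : ℝ := Real.exp (-(F σ) / (2 * S)) with hr_def
  have hr0 : 0 < r := Real.exp_pos _
  have hr1 : r < 1 := by
    rw [hr_def]
    exact Real.exp_lt_one_iff.mpr (div_neg_of_neg_of_pos (by linarith) (by linarith))
  refine ⟨fun i => (r:ℂ) * v (σ i), ?_, ?_, ?_⟩
  · intro i
    rw [norm_mul, Complex.norm_real, Real.norm_eq_abs, abs_of_pos hr0, habs, mul_one]
    exact hr1
  · intro a b h
    have : v (σ a) = v (σ b) := by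
      have hrne : ((r:ℝ) : ℂ) ≠ 0 := by
        simpa using ne_of_gt hr0
      exact mul_left_cancel₀ hrne h
    exact σ.injective (hinj this)
  · show 0 < ∑ i, ∑ j ∈ univ.filter (fun j => j ≠ i),
        w i * w j * Real.log (‖(r:ℂ) * v (σ i) - (r:ℂ) * v (σ j)‖)
    have hterm : ∀ i : Fin N, ∀ j ∈ univ.filter (fun j => j ≠ i),
        w i * w j * Real.log (‖(r:ℂ) * v (σ i) - (r:ℂ) * v (σ j)‖)
          = w i * w j * Real.log r + w i * w j * c (σ i) (σ j) := by
      intro i j hj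
      have hji : j ≠ i := (mem_filter.mp hj).2
      have h3 : v (σ i) - v (σ j) ≠ 0 := by
        refine sub_ne_zero_of_ne fun h => hji ?_
        exact (σ.injective (hinj h)).symm
      have h2 : ‖(r:ℂ) * v (σ i) - (r:ℂ) * v (σ j)‖
          = r * ‖v (σ i) - v (σ j)‖ := by
        rw [show (r:ℂ) * v (σ i) - (r:ℂ) * v (σ j) = (r:ℂ) * (v (σ i) - v (σ j)) by ring,
          norm_mul, Complex.norm_real, Real.norm_eq_abs, abs_of_pos hr0]
      rw [h2, Real.log_mul (ne_of_gt hr0) (norm_ne_zero_iff.mpr h3), mul_add]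
    have key : (∑ i, ∑ j ∈ univ.filter (fun j => j ≠ i),
          w i * w j * Real.log (‖(r:ℂ) * v (σ i) - (r:ℂ) * v (σ j)‖)) = F σ / 2 := by
      have step1 : (∑ i, ∑ j ∈ univ.filter (fun j => j ≠ i),
            w i * w j * Real.log (‖(r:ℂ) * v (σ i) - (r:ℂ) * v (σ j)‖))
          = ∑ i, ((∑ j ∈ univ.filter (fun j => j ≠ i), w i * w j) * Real.log r
            + ∑ j ∈ univ.filter (fun j => j ≠ i), w i * w j * c (σ i) (σ j)) := by
        apply sum_congr rfl
        intro i _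
        rw [Finset.sum_congr rfl (hterm i), Finset.sum_add_distrib, Finset.sum_mul]
      have step2 : (∑ i, ((∑ j ∈ univ.filter (fun j => j ≠ i), w i * w j) * Real.log r
            + ∑ j ∈ univ.filter (fun j => j ≠ i), w i * w j * c (σ i) (σ j)))
          = S * Real.log r + F σ := by
        rw [Finset.sum_add_distrib, ← Finset.sum_mul, ← hS_def]
      rw [step1, step2, hr_def, Real.log_exp]
      field_simp
      ring
    rw [key]
    exact half_pos hσ

/-- **The case `b = 1`** (so `W^micro(z,d) = −π Σ_{i≠j} dᵢd_j ln|zᵢ−z_j|`), all products of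
degrees nonnegative and at least one positive: the infimum over `(𝔻^N)*` is finite
(`0 > inf > −π Σ_{i≠j} dᵢd_j ln 2`) but is not attained: dilating any configuration by
`λ = 2/(1 + max_l |z_l|) > 1` strictly decreases the energy. -/
theorem b_eq_one_no_minimizer (N : ℕ) (hN : 2 ≤ N) (d : Fin N → ℤ)
    (hpos : ∀ k l, 0 ≤ d k * d l)
    (k₀ l₀ : Fin N) (hk₀l₀ : k₀ ≠ l₀) (hprod : 0 < d k₀ * d l₀)
    (W : (Fin N → ℂ) → ℝ)
    (hW : ∀ z : Fin N → ℂ, W z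
      = -π * ∑ i, ∑ j ∈ Finset.univ.filter (fun j => j ≠ i),
          (d i : ℝ) * (d j : ℝ) * Real.log (‖z i - z j‖)) :
    -- the infimum is `< 0` …
    (∃ z : Fin N → ℂ, (∀ i, z i ∈ Metric.ball (0:ℂ) 1) ∧ Function.Injective z ∧ W z < 0) ∧
    -- … and `> −π (Σ_{i≠j} dᵢd_j) ln 2`, hence finite …
    (∀ z : Fin N → ℂ, (∀ i, z i ∈ Metric.ball (0:ℂ) 1) → Function.Injective z →
      -π * (∑ i, ∑ j ∈ Finset.univ.filter (fun j => j ≠ i), (d i : ℝ) * (d j : ℝ))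
          * Real.log 2 < W z) ∧
    -- … but it is not attained: dilation strictly decreases `W`
    (∀ z : Fin N → ℂ, (∀ i, z i ∈ Metric.ball (0:ℂ) 1) → Function.Injective z →
      (1:ℝ) < 2 / (1 + ⨆ l, ‖z l‖) ∧
      (∀ i, ((2 / (1 + ⨆ l, ‖z l‖) : ℝ) : ℂ) * z i ∈ Metric.ball (0:ℂ) 1) ∧
      Function.Injective (fun i => ((2 / (1 + ⨆ l, ‖z l‖) : ℝ) : ℂ) * z i) ∧
      W (fun i => ((2 / (1 + ⨆ l, ‖z l‖) : ℝ) : ℂ) * z i)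
        = W z - π * Real.log (2 / (1 + ⨆ l, ‖z l‖))
            * (∑ i, ∑ j ∈ Finset.univ.filter (fun j => j ≠ i), (d i : ℝ) * (d j : ℝ)) ∧
      W (fun i => ((2 / (1 + ⨆ l, ‖z l‖) : ℝ) : ℂ) * z i) < W z) := by
  set w : Fin N → ℝ := fun i => (d i : ℝ) with hw_def
  have hw : ∀ k l, 0 ≤ w k * w l := by
    intro k l
    have := hpos k l
    simp only [hw_def, ← Int.cast_mul]
    exact_mod_cast this
  have hp : 0 < w k₀ * w l₀ := by
    simp only [hw_def, ← Int.cast_mul]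
    exact_mod_cast hprod
  have hS : 0 < ∑ i, ∑ j ∈ univ.filter (fun j => j ≠ i), w i * w j :=
    sum_pair_pos w hw k₀ l₀ hk₀l₀ hp
  refine ⟨?_, ?_, ?_⟩
  · -- part 1
    obtain ⟨z, hball, hinj, hposum⟩ := exists_good_config N hN w hw k₀ l₀ hk₀l₀ hp
    refine ⟨z, fun i => ?_, hinj, ?_⟩
    · rw [Metric.mem_ball, dist_zero_right]
      exact hball i
    · rw [hW z]
      have : 0 < π * ∑ i, ∑ j ∈ univ.filter (fun j => j ≠ i),
          w i * w j * Real.log (‖z i - z j‖) := mul_pos Real.pi_pos hposum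
      nlinarith
  · -- part 2
    intro z hball hinj
    rw [hW z]
    have hterm : ∀ i : Fin N, ∀ j ∈ univ.filter (fun j => j ≠ i),
        w i * w j * Real.log (‖z i - z j‖) ≤ w i * w j * Real.log 2 := by
      intro i j hj
      have hji : j ≠ i := (mem_filter.mp hj).2
      have h0 : (0:ℝ) < ‖z i - z j‖ := by
        rw [norm_pos_iff]
        exact sub_ne_zero_of_ne fun h => hji (hinj h).symm
      have h2 : ‖z i - z j‖ < 2 := by
        have hi := hball i; have hj' := hball j
        rw [Metric.mem_ball, dist_zero_right] at hi hj'
        have htri : ‖z i - z j‖ ≤ ‖z i‖ + ‖z j‖ := by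
          simpa using norm_sub_le (z i) (z j)
        linarith
      exact mul_le_mul_of_nonneg_left (le_of_lt (Real.log_lt_log h0 h2)) (hw i j)
    have hstrict : ∑ j ∈ univ.filter (fun j => j ≠ k₀),
        w k₀ * w j * Real.log (‖z k₀ - z j‖)
        < ∑ j ∈ univ.filter (fun j => j ≠ k₀), w k₀ * w j * Real.log 2 := by
      refine Finset.sum_lt_sum (hterm k₀) ⟨l₀, ?_, ?_⟩
      · simp [Ne.symm hk₀l₀]
      · have h0 : (0:ℝ) < ‖z k₀ - z l₀‖ := by
          rw [norm_pos_iff]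
          exact sub_ne_zero_of_ne fun h => hk₀l₀ (hinj h)
        have h2 : ‖z k₀ - z l₀‖ < 2 := by
          have hi := hball k₀; have hj' := hball l₀
          rw [Metric.mem_ball, dist_zero_right] at hi hj'
          have htri : ‖z k₀ - z l₀‖ ≤ ‖z k₀‖ + ‖z l₀‖ := by
            simpa using norm_sub_le (z k₀) (z l₀)
          linarith
        exact mul_lt_mul_of_pos_left (Real.log_lt_log h0 h2) hp
    have key : (∑ i, ∑ j ∈ univ.filter (fun j => j ≠ i),
          w i * w j * Real.log (‖z i - z j‖))
        < (∑ i, ∑ j ∈ univ.filter (fun j => j ≠ i), w i * w j) * Real.log 2 := by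
      have h1 : (∑ i, ∑ j ∈ univ.filter (fun j => j ≠ i),
            w i * w j * Real.log (‖z i - z j‖))
          < ∑ i, ∑ j ∈ univ.filter (fun j => j ≠ i), w i * w j * Real.log 2 :=
        Finset.sum_lt_sum (fun i _ => Finset.sum_le_sum (hterm i))
          ⟨k₀, mem_univ _, hstrict⟩
      have h2 : (∑ i, ∑ j ∈ univ.filter (fun j => j ≠ i), w i * w j * Real.log 2)
          = (∑ i, ∑ j ∈ univ.filter (fun j => j ≠ i), w i * w j) * Real.log 2 := by
        rw [Finset.sum_mul]
        exact Finset.sum_congr rfl fun i _ => (Finset.sum_mul _ _ _).symm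
      linarith
    nlinarith [mul_pos Real.pi_pos (sub_pos.mpr key)]
  · -- part 3
    intro z hball hinj
    set M : ℝ := ⨆ l, ‖z l‖ with hM_def
    haveI : Nonempty (Fin N) := ⟨⟨0, by omega⟩⟩
    obtain ⟨a, ha⟩ := Finite.exists_max (fun l => ‖z l‖)
    have hbdd : BddAbove (Set.range fun l => ‖z l‖) :=
      Set.Finite.bddAbove (Set.finite_range _)
    have hM_eq : M = ‖z a‖ :=
      le_antisymm (ciSup_le ha) (le_ciSup hbdd a)
    have hM0 : 0 ≤ M := by rw [hM_eq]; exact norm_nonneg _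
    have hM1 : M < 1 := by
      rw [hM_eq]
      have := hball a
      rwa [Metric.mem_ball, dist_zero_right] at this
    have h1M : (0:ℝ) < 1 + M := by linarith
    set lam : ℝ := 2 / (1 + M) with hlam_def
    have hlam1 : 1 < lam := (one_lt_div h1M).mpr (by linarith)
    have hlam0 : 0 < lam := by linarith
    have hlamc : ((lam:ℝ):ℂ) ≠ 0 := Complex.ofReal_ne_zero.mpr (ne_of_gt hlam0)
    have hlamM : lam * M < 1 := by
      rw [hlam_def, div_mul_eq_mul_div, div_lt_one h1M]
      linarith
    have hmem : ∀ i, ((lam:ℝ):ℂ) * z i ∈ Metric.ball (0:ℂ) 1 := by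
      intro i
      rw [Metric.mem_ball, dist_zero_right, norm_mul,
        Complex.norm_real, Real.norm_eq_abs, abs_of_pos hlam0]
      have hzi : ‖z i‖ ≤ M := hM_eq ▸ ha i
      calc lam * ‖z i‖ ≤ lam * M :=
            mul_le_mul_of_nonneg_left hzi (le_of_lt hlam0)
        _ < 1 := hlamM
    have hinj' : Function.Injective (fun i => ((lam:ℝ):ℂ) * z i) := by
      intro a b h
      exact hinj (mul_left_cancel₀ hlamc h)
    have hkey : W (fun i => ((lam:ℝ):ℂ) * z i)
        = W z - π * Real.log lam
            * (∑ i, ∑ j ∈ univ.filter (fun j => j ≠ i), w i * w j) := by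
      simp only [hW]
      have hterm : ∀ i : Fin N, ∀ j ∈ univ.filter (fun j => j ≠ i),
          w i * w j * Real.log (‖(lam:ℂ) * z i - (lam:ℂ) * z j‖)
            = w i * w j * Real.log (‖z i - z j‖) + w i * w j * Real.log lam := by
        intro i j hj
        have hji : j ≠ i := (mem_filter.mp hj).2
        have h3 : z i - z j ≠ 0 := sub_ne_zero_of_ne fun h => hji (hinj h).symm
        have h2 : ‖(lam:ℂ) * z i - (lam:ℂ) * z j‖
            = lam * ‖z i - z j‖ := by
          rw [show (lam:ℂ) * z i - (lam:ℂ) * z j = (lam:ℂ) * (z i - z j) by ring,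
            norm_mul, Complex.norm_real, Real.norm_eq_abs, abs_of_pos hlam0]
        rw [h2, Real.log_mul (ne_of_gt hlam0) (norm_ne_zero_iff.mpr h3), mul_add, add_comm]
      have hsplit : (∑ i, ∑ j ∈ univ.filter (fun j => j ≠ i),
            w i * w j * Real.log (‖(lam:ℂ) * z i - (lam:ℂ) * z j‖))
          = (∑ i, ∑ j ∈ univ.filter (fun j => j ≠ i),
              w i * w j * Real.log (‖z i - z j‖))
            + (∑ i, ∑ j ∈ univ.filter (fun j => j ≠ i), w i * w j) * Real.log lam := by
        rw [Finset.sum_mul, ← Finset.sum_add_distrib]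
        apply Finset.sum_congr rfl
        intro i _
        rw [Finset.sum_congr rfl (hterm i), Finset.sum_add_distrib, Finset.sum_mul]
      rw [hsplit]
      ring
    refine ⟨hlam1, hmem, hinj', hkey, ?_⟩
    rw [hkey]
    have : 0 < π * Real.log lam
        * (∑ i, ∑ j ∈ univ.filter (fun j => j ≠ i), w i * w j) :=
      mul_pos (mul_pos Real.pi_pos (Real.log_pos hlam1)) hS
    linarith
end
end

section
/- Let ω = 𝔻, α = b² on 𝔻 and 1 outside with b > 1, N ≥ 1, and d ∈ ℤ^N ∖ {0}. Then W^micro(·,d) is not bounded below on (𝔻^N)*: along the configurations z^{(n)} with z_k^{(n)} = (1 − 1/n) e^{2πik/N}, one has W^micro(z^{(n)},d) = O(1) + b²π((b²−1)/(1+b²)) Σ_j d_j² ln(1−|z_j^{(n)}|²) → −∞ as n → ∞. In particular inf{W^micro(z,d) : z ∈ (𝔻^N)*} = −∞ and W^micro(·,d) admits no minimizer. -/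
/-!
On a dilated configuration `ρ ω` of distinct points `|ω_k| = 1` (here the `N`-th roots of unity),
the interaction terms `ln|ρω_i − ρω_j|` and `ln|1 − ρ²ω_i ω̄_j|` converge as `ρ → 1⁻` (the points stay distinct and
`ω_i ω̄_j ≠ 1`), while the boundary term equals `b²π (b²−1)/(1+b²) (Σ d_j²) ln(1 − ρ²)`, whose
coefficient is positive for `b > 1`, `d ≠ 0`, and whose logarithm tends to `−∞`.
-/

noncomputable section

open Real Filter Topology

namespace GLPin

open Finset ComplexConjugate

def pairEnergy (b : ℝ) {N : ℕ} (z : Fin N → ℂ) (d : Fin N → ℤ) : ℝ :=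
  -(b ^ 2) * π *
    ((∑ i, ∑ j ∈ univ.filter (fun j => j ≠ i), (d i : ℝ) * (d j : ℝ) * log ‖z i - z j‖)
      + (1 - b ^ 2) / (1 + b ^ 2) *
          ∑ i, ∑ j ∈ univ.filter (fun j => j ≠ i),
            (d i : ℝ) * (d j : ℝ) * log ‖1 - z i * conj (z j)‖)

lemma Wmicro_eq_pairEnergy_add (b : ℝ) {N : ℕ} (z : Fin N → ℂ) (d : Fin N → ℤ) :
    Wmicro b z d = pairEnergy b z d
      + b ^ 2 * π * ((b ^ 2 - 1) / (1 + b ^ 2)) * ∑ j, (d j : ℝ) ^ 2 * log (1 - ‖z j‖ ^ 2) := by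
  unfold Wmicro pairEnergy
  ring

lemma continuousAt_pairEnergy (b : ℝ) {N : ℕ} (d : Fin N → ℤ) {z : Fin N → ℂ}
    (hz : Function.Injective z) (hconj : ∀ i j, j ≠ i → z i * conj (z j) ≠ 1) :
    ContinuousAt (fun w => pairEnergy b w d) z := by
  have hdist : ∀ i, ∀ j ∈ univ.filter (fun j => j ≠ i),
      ContinuousAt (fun w : Fin N → ℂ => (d i : ℝ) * (d j : ℝ) * log ‖w i - w j‖) z := by
    intro i j hj
    have hne : ‖z i - z j‖ ≠ 0 :=
      norm_ne_zero_iff.2 (sub_ne_zero.2 (hz.ne (mem_filter.1 hj).2.symm))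
    exact continuousAt_const.mul ((by fun_prop : ContinuousAt (fun w : Fin N → ℂ =>
      ‖w i - w j‖) z).log hne)
  have hrefl : ∀ i, ∀ j ∈ univ.filter (fun j => j ≠ i),
      ContinuousAt (fun w : Fin N → ℂ =>
        (d i : ℝ) * (d j : ℝ) * log ‖1 - w i * conj (w j)‖) z := by
    intro i j hj
    have hne : ‖1 - z i * conj (z j)‖ ≠ 0 :=
      norm_ne_zero_iff.2 (sub_ne_zero.2 (hconj i j (mem_filter.1 hj).2).symm)
    exact continuousAt_const.mul ((by fun_prop : ContinuousAt (fun w : Fin N → ℂ =>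
      ‖1 - w i * conj (w j)‖) z).log hne)
  unfold pairEnergy
  exact continuousAt_const.mul
    ((tendsto_finsetSum _ fun i _ => tendsto_finsetSum _ (hdist i)).add
      (continuousAt_const.mul (tendsto_finsetSum _ fun i _ => tendsto_finsetSum _ (hrefl i))))

lemma mul_conj_ne_one_of_norm_eq_one {z w : ℂ} (hw : ‖w‖ = 1) (hzw : z ≠ w) :
    z * conj w ≠ 1 := by
  intro h
  have hww : w * conj w = 1 := by simp [Complex.mul_conj', hw]
  exact hzw (mul_right_cancel₀ (by rintro h0; simp [h0] at hww) (h.trans hww.symm))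

lemma tendsto_log_one_sub_sq_nhdsLT_one :
    Tendsto (fun ρ : ℝ => log (1 - ρ ^ 2)) (𝓝[<] 1) atBot := by
  refine tendsto_log_nhdsGT_zero.comp (tendsto_nhdsWithin_of_tendsto_nhds_of_eventually_within
    _ ?_ ?_)
  · have : Tendsto (fun ρ : ℝ => 1 - ρ ^ 2) (𝓝 1) (𝓝 (1 - 1 ^ 2)) :=
      (continuous_const.sub (continuous_pow 2)).tendsto 1
    simpa using this.mono_left nhdsWithin_le_nhds
  · filter_upwards [Ioo_mem_nhdsLT (show (0 : ℝ) < 1 by norm_num)] with ρ ⟨h0, h1⟩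
    show 0 < 1 - ρ ^ 2
    nlinarith

lemma sum_sq_pos_of_ne_zero {ι : Type*} [Fintype ι] {d : ι → ℤ} (hd : d ≠ 0) :
    0 < ∑ j, (d j : ℝ) ^ 2 := by
  obtain ⟨j, hj⟩ := Function.ne_iff.1 hd
  have hj : (d j : ℝ) ≠ 0 := by exact_mod_cast hj
  exact sum_pos' (fun _ _ => sq_nonneg _) ⟨j, mem_univ j, by positivity⟩

theorem tendsto_Wmicro_dilate_atBot {b : ℝ} (hb : 1 < b) {N : ℕ} {d : Fin N → ℤ} (hd : d ≠ 0)
    {ω : Fin N → ℂ} (hω : ∀ k, ‖ω k‖ = 1) (hinj : Function.Injective ω) :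
    Tendsto (fun ρ : ℝ => Wmicro b (fun k => (ρ : ℂ) * ω k) d) (𝓝[<] 1) atBot := by
  have hboundary : ∀ ρ : ℝ, ∑ j, (d j : ℝ) ^ 2 * log (1 - ‖(ρ : ℂ) * ω j‖ ^ 2)
      = (∑ j, (d j : ℝ) ^ 2) * log (1 - ρ ^ 2) := by
    intro ρ
    rw [sum_mul]
    refine sum_congr rfl fun j _ => ?_
    rw [norm_mul, hω, mul_one, Complex.norm_real, Real.norm_eq_abs, sq_abs]
  have hpair : Tendsto (fun ρ : ℝ => pairEnergy b (fun k => (ρ : ℂ) * ω k) d) (𝓝[<] 1)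
      (𝓝 (pairEnergy b ω d)) := by
    have hdil : Tendsto (fun ρ : ℝ => fun k => (ρ : ℂ) * ω k) (𝓝 1) (𝓝 ω) := by
      simpa using (by fun_prop : Continuous fun ρ : ℝ => fun k => (ρ : ℂ) * ω k).tendsto 1
    exact (continuousAt_pairEnergy b d hinj fun i j hji =>
      mul_conj_ne_one_of_norm_eq_one (hω j) (hinj.ne hji.symm)).tendsto.comp
        (hdil.mono_left nhdsWithin_le_nhds)
  have hcoeff : 0 < b ^ 2 * π * ((b ^ 2 - 1) / (1 + b ^ 2)) * ∑ j, (d j : ℝ) ^ 2 := by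
    have : 1 < b ^ 2 := by nlinarith
    have := sum_sq_pos_of_ne_zero hd
    positivity
  simp only [Wmicro_eq_pairEnergy_add, hboundary, ← mul_assoc]
  exact hpair.add_atBot (tendsto_log_one_sub_sq_nhdsLT_one.const_mul_atBot hcoeff)

def unitRoot (N : ℕ) (k : Fin N) : ℂ :=
  Complex.exp (((2 * π * (k : ℕ) / (N : ℝ) : ℝ) : ℂ) * Complex.I)

lemma norm_unitRoot (N : ℕ) (k : Fin N) : ‖unitRoot N k‖ = 1 :=
  Complex.norm_exp_ofReal_mul_I _

lemma unitRoot_eq_pow (N : ℕ) (k : Fin N) :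
    unitRoot N k = Complex.exp (2 * π * Complex.I / N) ^ (k : ℕ) := by
  rw [unitRoot, ← Complex.exp_nat_mul]
  push_cast
  ring_nf

lemma unitRoot_injective (N : ℕ) : Function.Injective (unitRoot N) := by
  intro i j hij
  rw [unitRoot_eq_pow, unitRoot_eq_pow] at hij
  exact Fin.ext ((Complex.isPrimitiveRoot_exp N (Fin.pos i).ne').pow_inj i.2 j.2 hij)

theorem b_gt_one_no_minimizer_general (b : ℝ) (hb : 1 < b) (N : ℕ)
    (d : Fin N → ℤ) (hd : d ≠ 0) :
    Tendsto (fun n : ℕ => Wmicro b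
        (fun k : Fin N => ((1 - 1 / (n : ℝ) : ℝ) : ℂ)
          * Complex.exp (((2 * π * (k : ℕ) / (N : ℝ) : ℝ) : ℂ) * Complex.I)) d)
      atTop atBot ∧
    (∀ M : ℝ, ∃ z : Fin N → ℂ,
      (∀ i, z i ∈ Metric.ball (0:ℂ) 1) ∧ Function.Injective z ∧ Wmicro b z d < M) ∧
    ¬ ∃ z : Fin N → ℂ, (∀ i, z i ∈ Metric.ball (0:ℂ) 1) ∧ Function.Injective z ∧
        ∀ z' : Fin N → ℂ, (∀ i, z' i ∈ Metric.ball (0:ℂ) 1) → Function.Injective z' →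
          Wmicro b z d ≤ Wmicro b z' d := by
  have hW := tendsto_Wmicro_dilate_atBot hb hd (norm_unitRoot N) (unitRoot_injective N)
  have hρ : Tendsto (fun n : ℕ => 1 - 1 / (n : ℝ)) atTop (𝓝[<] 1) := by
    refine tendsto_nhdsWithin_of_tendsto_nhds_of_eventually_within _ ?_ ?_
    · simpa using tendsto_const_nhds.sub (tendsto_one_div_atTop_nhds_zero_nat (𝕜 := ℝ))
    · filter_upwards [eventually_gt_atTop 0] with n hn
      simp only [Set.mem_Iio, sub_lt_self_iff]
      positivity
  have hunbounded : ∀ M : ℝ, ∃ z : Fin N → ℂ,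
      (∀ i, z i ∈ Metric.ball (0:ℂ) 1) ∧ Function.Injective z ∧ Wmicro b z d < M := by
    intro M
    obtain ⟨ρ, hM, h0, h1⟩ :=
      ((hW.eventually_lt_atBot M).and (Ioo_mem_nhdsLT zero_lt_one)).exists
    refine ⟨fun k => (ρ : ℂ) * unitRoot N k, fun k => ?_, fun i j hij => ?_, hM⟩
    · simp [norm_unitRoot, abs_of_pos h0, h1]
    · exact unitRoot_injective N (mul_left_cancel₀ (by exact_mod_cast h0.ne') hij)
  refine ⟨hW.comp hρ, hunbounded, ?_⟩
  rintro ⟨z, hz, hz_inj, hmin⟩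
  obtain ⟨z', hz', hz'_inj, hlt⟩ := hunbounded (Wmicro b z d)
  exact (hmin z' hz' hz'_inj).not_gt hlt

/-- **The case `b > 1`:** `W^micro(·,d)` is not bounded below on `(𝔻^N)*`: it tends to `−∞`
along the configurations `z_k^{(n)} = (1−1/n) e^{2πik/N}`; in particular the infimum is `−∞`
and there is no minimizer. -/
theorem b_gt_one_no_minimizer (b : ℝ) (hb : 1 < b) (N : ℕ) (hN : 1 ≤ N)
    (d : Fin N → ℤ) (hd : d ≠ 0) :
    Tendsto (fun n : ℕ => Wmicro b
        (fun k : Fin N => ((1 - 1 / (n : ℝ) : ℝ) : ℂ)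
          * Complex.exp (((2 * π * (k : ℕ) / (N : ℝ) : ℝ) : ℂ) * Complex.I)) d)
      atTop atBot ∧
    (∀ M : ℝ, ∃ z : Fin N → ℂ,
      (∀ i, z i ∈ Metric.ball (0:ℂ) 1) ∧ Function.Injective z ∧ Wmicro b z d < M) ∧
    ¬ ∃ z : Fin N → ℂ, (∀ i, z i ∈ Metric.ball (0:ℂ) 1) ∧ Function.Injective z ∧
        ∀ z' : Fin N → ℂ, (∀ i, z' i ∈ Metric.ball (0:ℂ) 1) → Function.Injective z' →
          Wmicro b z d ≤ Wmicro b z' d :=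
  b_gt_one_no_minimizer_general b hb N d hd

end GLPin
end
end
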